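/- arXiv:2202.12126 — 2 statements merged into one kernel-verified Lean document; each statement's English description precedes it below -/
import Mathlib

section
/- Let r ≥ 1 be an integer, λ_1,…,λ_r > 0, T ≥ 0, D > 0, and let N be a positive integer. For each j ∈ {1,…,r} let (a_{n,j})_{n≥N} be complex numbers satisfying Re(a_{n,j}) < 0, |Im(a_{n,j})| ≤ T, and |a_{n,j} + n/λ_j| ≤ D for all n ≥ N. Then there exist constants K > 0, C > 0 and R > 0 such that for every s ∈ ℂ with |s| ≥ R, ∑_{j=1}^r ∑_{n ≥ N, |a_{n,j}| < |s|/2} |s|² Re(a_{n,j}) / (|a_{n,j}|² |s − a_{n,j}|²) ≤ −K log|s| + C. -/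
/-!
All summands are nonpositive, so it suffices to bound the sum for a single `j`; write `λ = λ_j`.
For `n ≥ 2λD` the point `a_n` lies within `n/(2λ)` of `-n/λ`, hence `Re a_n ≤ -n/(2λ)` and
`|a_n| ≤ 3n/(2λ)`; together with `|s - a_n| ≤ 3|s|/2` this bounds the summand by `-(8λ/81)/n`.
Every such `n` below `λ|s|/3` occurs in the sum, and the harmonic sum over these `n` is
`log |s| + O(1)`.
-/

theorem Real.log_div_le_sum_Ico_inv {m M : ℕ} (hm : 0 < m) (hmM : m ≤ M) :
    Real.log (M / m) ≤ ∑ n ∈ Finset.Ico m M, (n : ℝ)⁻¹ := by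
  have hm' : (0 : ℝ) < m := by exact_mod_cast hm
  rw [← integral_inv]
  · exact (inv_antitoneOn_Icc_right hm').integral_le_sum_Ico hmM
  · rw [Set.uIcc_of_le (by exact_mod_cast hmM)]
    exact fun h => hm'.not_ge h.1

theorem tsum_le_sum_of_nonpos {ι : Type*} {f : ι → ℝ} (hf : Summable f) (h : ∀ i, f i ≤ 0)
    (s : Finset ι) : ∑' i, f i ≤ ∑ i ∈ s, f i := by
  simpa [tsum_neg] using hf.neg.sum_le_tsum s fun i _ => neg_nonneg.2 (h i)

theorem Complex.norm_le_of_norm_add_ofReal_le {a : ℂ} {x : ℝ} (hx : 0 ≤ x)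
    (h : ‖a + x‖ ≤ x / 2) : ‖a‖ ≤ 3 * x / 2 := by
  have := norm_sub_le (a + x) (x : ℂ)
  rw [add_sub_cancel_right, Complex.norm_real, Real.norm_of_nonneg hx] at this
  linarith

theorem Complex.re_le_of_norm_add_ofReal_le {a : ℂ} {x : ℝ} (h : ‖a + x‖ ≤ x / 2) :
    a.re ≤ -(x / 2) := by
  have := (abs_le.1 ((abs_re_le_norm (a + x)).trans h)).2
  simp only [add_re, ofReal_re] at this
  linarith

theorem Complex.re_div_norm_sq_le_of_norm_add_ofReal_le {a : ℂ} {x : ℝ} (hx : 0 < x)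
    (h : ‖a + x‖ ≤ x / 2) : a.re / ‖a‖ ^ 2 ≤ -2 / (9 * x) := by
  have hre := re_le_of_norm_add_ofReal_le h
  have hnorm := norm_le_of_norm_add_ofReal_le hx.le h
  have hpos : 0 < ‖a‖ := by linarith [neg_le_abs a.re, abs_re_le_norm a]
  rw [div_le_div_iff₀ (by positivity) (by positivity)]
  nlinarith

theorem Complex.norm_sq_mul_re_div_le_of_norm_lt_half {s a : ℂ} (hre : a.re ≤ 0)
    (has : ‖a‖ < ‖s‖ / 2) :
    ‖s‖ ^ 2 * a.re / (‖a‖ ^ 2 * ‖s - a‖ ^ 2) ≤ 4 / 9 * (a.re / ‖a‖ ^ 2) := by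
  have hsa : ‖s - a‖ ≤ 3 / 2 * ‖s‖ := by linarith [norm_sub_le s a]
  have hsa_pos : 0 < ‖s - a‖ := by linarith [norm_sub_norm_le s a, norm_nonneg a]
  have hratio : 4 / 9 ≤ ‖s‖ ^ 2 / ‖s - a‖ ^ 2 := by
    rw [le_div_iff₀ (by positivity)]
    nlinarith [norm_nonneg s]
  calc ‖s‖ ^ 2 * a.re / (‖a‖ ^ 2 * ‖s - a‖ ^ 2)
        = a.re / ‖a‖ ^ 2 * (‖s‖ ^ 2 / ‖s - a‖ ^ 2) := by
          rw [mul_comm (‖s‖ ^ 2), mul_div_mul_comm]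
    _ ≤ a.re / ‖a‖ ^ 2 * (4 / 9) :=
        mul_le_mul_of_nonpos_left hratio (div_nonpos_of_nonpos_of_nonneg hre (by positivity))
    _ = 4 / 9 * (a.re / ‖a‖ ^ 2) := mul_comm _ _

noncomputable def zeroSummand (N : ℕ) (b : ℕ → ℂ) (s : ℂ) (n : ℕ) : ℝ :=
  Set.indicator {n | N ≤ n ∧ ‖b n‖ < ‖s‖ / 2}
    (fun n => ‖s‖ ^ 2 * (b n).re / (‖b n‖ ^ 2 * ‖s - b n‖ ^ 2)) n

section ZeroSummand

variable {b : ℕ → ℂ} {lam D : ℝ} {N : ℕ}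

theorem zeroSummand_nonpos (hre : ∀ n, N ≤ n → (b n).re ≤ 0) (s : ℂ) (n : ℕ) :
    zeroSummand N b s n ≤ 0 :=
  Set.indicator_nonpos (fun n hn =>
    div_nonpos_of_nonpos_of_nonneg (mul_nonpos_of_nonneg_of_nonpos (by positivity) (hre n hn.1))
      (by positivity)) n

theorem finite_setOf_norm_lt (hlam : 0 < lam)
    (hb : ∀ n, N ≤ n → ‖b n + (n : ℂ) / lam‖ ≤ D) (R : ℝ) :
    {n | N ≤ n ∧ ‖b n‖ < R}.Finite := by
  refine (Set.finite_Iio ⌈lam * (R + D)⌉₊).subset fun n ⟨hn, hbn⟩ =>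
    Nat.lt_ceil.2 <| (div_lt_iff₀' hlam).1 ?_
  have h := norm_sub_le (b n + (n : ℂ) / lam) (b n)
  rw [add_sub_cancel_left, norm_div, Complex.norm_natCast, Complex.norm_real,
    Real.norm_of_nonneg hlam.le] at h
  linarith [hb n hn]

theorem summable_zeroSummand (hlam : 0 < lam)
    (hb : ∀ n, N ≤ n → ‖b n + (n : ℂ) / lam‖ ≤ D) (s : ℂ) :
    Summable (zeroSummand N b s) :=
  summable_of_hasFiniteSupport <|
    (finite_setOf_norm_lt hlam hb _).subset Set.support_indicator_subset

theorem zeroSummand_le_neg_inv (hlam : 0 < lam)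
    (hb : ∀ n, N ≤ n → ‖b n + (n : ℂ) / lam‖ ≤ D) (s : ℂ) {n : ℕ}
    (hn : N ≤ n) (hn₀ : 0 < n) (hnD : 2 * lam * D ≤ n)
    (hns : 3 * n < lam * ‖s‖) :
    zeroSummand N b s n ≤ -(8 * lam / 81) * (n : ℝ)⁻¹ := by
  set x : ℝ := n / lam
  have hx : 0 < x := by positivity
  have hbx : ‖b n + x‖ ≤ x / 2 := by
    have : D ≤ x / 2 := by rw [div_div, le_div_iff₀ (by positivity)]; linarith
    simpa [x] using (hb n hn).trans this
  have hbs : ‖b n‖ < ‖s‖ / 2 := by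
    have : 3 * x < ‖s‖ := by rw [← mul_div_assoc, div_lt_iff₀ hlam]; linarith
    linarith [Complex.norm_le_of_norm_add_ofReal_le hx.le hbx]
  have hmem : n ∈ {n | N ≤ n ∧ ‖b n‖ < ‖s‖ / 2} := ⟨hn, hbs⟩
  rw [zeroSummand, Set.indicator_of_mem hmem]
  calc ‖s‖ ^ 2 * (b n).re / (‖b n‖ ^ 2 * ‖s - b n‖ ^ 2)
      ≤ 4 / 9 * ((b n).re / ‖b n‖ ^ 2) :=
        Complex.norm_sq_mul_re_div_le_of_norm_lt_half
          (by linarith [Complex.re_le_of_norm_add_ofReal_le hbx]) hbs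
    _ ≤ 4 / 9 * (-2 / (9 * x)) := by
        have := Complex.re_div_norm_sq_le_of_norm_add_ofReal_le hx hbx
        linarith
    _ = -(8 * lam / 81) * (n : ℝ)⁻¹ := by simp only [x]; field_simp; norm_num

theorem exists_tsum_zeroSummand_le_neg_log (hlam : 0 < lam)
    (hre : ∀ n, N ≤ n → (b n).re ≤ 0)
    (hb : ∀ n, N ≤ n → ‖b n + (n : ℂ) / lam‖ ≤ D) :
    ∃ K > (0 : ℝ), ∃ C > (0 : ℝ), ∃ R > (0 : ℝ), ∀ s : ℂ, R ≤ ‖s‖ →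
      ∑' n, zeroSummand N b s n ≤ -K * Real.log ‖s‖ + C := by
  set N₀ : ℕ := N + ⌈2 * lam * D⌉₊ + 1
  have hN₀ : (0 : ℝ) < N₀ := by positivity
  have hN₀D : 2 * lam * D ≤ N₀ := by
    simp only [N₀]; push_cast; linarith [Nat.le_ceil (2 * lam * D), N.cast_nonneg (α := ℝ)]
  set K : ℝ := 8 * lam / 81
  have hK : -K ≤ 0 := neg_nonpos.2 (by positivity)
  refine ⟨K, by positivity, max (K * (Real.log N₀ - Real.log (lam / 3))) 1,
    lt_max_of_lt_right one_pos, 3 * N₀ / lam, by positivity, fun s hs => ?_⟩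
  have hs₀ : 0 < ‖s‖ := (by positivity : (0 : ℝ) < 3 * N₀ / lam).trans_le hs
  have hN₀s : N₀ ≤ lam * ‖s‖ / 3 := by
    rw [div_le_iff₀ hlam] at hs
    linarith
  set M : ℕ := ⌈lam * ‖s‖ / 3⌉₊
  have hN₀M : N₀ ≤ M := by exact_mod_cast hN₀s.trans (Nat.le_ceil _)
  have hterm : ∀ n ∈ Finset.Ico N₀ M, zeroSummand N b s n ≤ -K * (n : ℝ)⁻¹ := by
    intro n hn
    obtain ⟨hN₀n, hnM⟩ := Finset.mem_Ico.1 hn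
    have hN₀n' : (N₀ : ℝ) ≤ n := by exact_mod_cast hN₀n
    refine zeroSummand_le_neg_inv hlam hb s (by omega) (by omega) (by linarith) ?_
    linarith [Nat.lt_ceil.1 hnM]
  calc ∑' n, zeroSummand N b s n ≤ ∑ n ∈ Finset.Ico N₀ M, zeroSummand N b s n :=
        tsum_le_sum_of_nonpos (summable_zeroSummand hlam hb s) (zeroSummand_nonpos hre s) _
    _ ≤ -K * ∑ n ∈ Finset.Ico N₀ M, (n : ℝ)⁻¹ := by
        rw [Finset.mul_sum]; exact Finset.sum_le_sum hterm
    _ ≤ -K * Real.log (M / N₀) :=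
        mul_le_mul_of_nonpos_left (Real.log_div_le_sum_Ico_inv (by omega) hN₀M) hK
    _ ≤ -K * Real.log (lam * ‖s‖ / 3 / N₀) := by
        refine mul_le_mul_of_nonpos_left (Real.log_le_log (by positivity) ?_) hK
        gcongr
        exact Nat.le_ceil _
    _ = -K * Real.log ‖s‖ + K * (Real.log N₀ - Real.log (lam / 3)) := by
        rw [Real.log_div (by positivity) hN₀.ne', mul_div_right_comm,
          Real.log_mul (by positivity) (by positivity)]
        ring
    _ ≤ _ := by gcongr; exact le_max_left _ _

end ZeroSummand

theorem trivial_zero_sum_estimate_general (r : ℕ) (hr : 1 ≤ r)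
    (lam : Fin r → ℝ) (hlam : ∀ j, 0 < lam j)
    (T : ℝ) (D : ℝ) (N : ℕ)
    (a : Fin r → ℕ → ℂ)
    (ha : ∀ j : Fin r, ∀ n : ℕ, N ≤ n →
      (a j n).re < 0 ∧ |(a j n).im| ≤ T ∧ ‖a j n + (n : ℂ) / (lam j : ℂ)‖ ≤ D) :
    ∃ K > (0 : ℝ), ∃ C > (0 : ℝ), ∃ R > (0 : ℝ), ∀ s : ℂ, R ≤ ‖s‖ →
      (∑ j : Fin r, ∑' n : ℕ,
          Set.indicator {n : ℕ | N ≤ n ∧ ‖a j n‖ < ‖s‖ / 2}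
            (fun n => ‖s‖ ^ 2 * (a j n).re / (‖a j n‖ ^ 2 * ‖s - a j n‖ ^ 2)) n)
        ≤ -K * Real.log ‖s‖ + C := by
  have hre : ∀ j n, N ≤ n → (a j n).re ≤ 0 := fun j n hn => (ha j n hn).1.le
  let j₀ : Fin r := ⟨0, hr⟩
  obtain ⟨K, hK, C, hC, R, hR, hj₀⟩ :=
    exists_tsum_zeroSummand_le_neg_log (hlam j₀) (hre j₀) fun n hn => (ha j₀ n hn).2.2
  refine ⟨K, hK, C, hC, R, hR, fun s hs => ?_⟩
  calc ∑ j, ∑' n, zeroSummand N (a j) s n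
        ≤ ∑ j ∈ {j₀}, ∑' n, zeroSummand N (a j) s n :=
        Finset.sum_le_sum_of_subset_of_nonpos' (Finset.subset_univ _) fun j _ _ =>
          tsum_nonpos (zeroSummand_nonpos (hre j) s)
    _ ≤ -K * Real.log ‖s‖ + C := by rw [Finset.sum_singleton]; exact hj₀ s hs

/-- If for each `1 ≤ j ≤ r` the numbers `a_{n,j}` (for `n ≥ N`) satisfy `Re a_{n,j} < 0`,
`|Im a_{n,j}| ≤ T` and `|a_{n,j} + n/λ_j| ≤ D`, then there are `K, C, R > 0` such that for
`|s| ≥ R`,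
`∑_{j=1}^r ∑_{n ≥ N, |a_{n,j}| < |s|/2} |s|² Re a_{n,j} / (|a_{n,j}|² |s − a_{n,j}|²)
  ≤ −K log|s| + C`. -/
theorem trivial_zero_sum_estimate (r : ℕ) (hr : 1 ≤ r)
    (lam : Fin r → ℝ) (hlam : ∀ j, 0 < lam j)
    (T : ℝ) (hT : 0 ≤ T) (D : ℝ) (hD : 0 < D) (N : ℕ) (hN : 0 < N)
    (a : Fin r → ℕ → ℂ)
    (ha : ∀ j : Fin r, ∀ n : ℕ, N ≤ n →
      (a j n).re < 0 ∧ |(a j n).im| ≤ T ∧ ‖a j n + (n : ℂ) / (lam j : ℂ)‖ ≤ D) :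
    ∃ K > (0 : ℝ), ∃ C > (0 : ℝ), ∃ R > (0 : ℝ), ∀ s : ℂ, R ≤ ‖s‖ →
      (∑ j : Fin r, ∑' n : ℕ,
          Set.indicator {n : ℕ | N ≤ n ∧ ‖a j n‖ < ‖s‖ / 2}
            (fun n => ‖s‖ ^ 2 * (a j n).re / (‖a j n‖ ^ 2 * ‖s - a j n‖ ^ 2)) n)
        ≤ -K * Real.log ‖s‖ + C :=
  trivial_zero_sum_estimate_general r hr lam hlam T D N a ha
end

section
/- Let F be an element of the Selberg class with F not identically equal to 1, let k ≥ 0 be an integer, and let α > 0. Then F^{(k)} has only finitely many zeros in the region {s ∈ ℂ : Re(s) > −α and |Im(s)| ≤ T_F}. -/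
open Complex

/-- An element of the Selberg class `𝒮`: a Dirichlet series `F(s) = ∑ a(n) n^(-s)` satisfying
the five Selberg axioms.  The field `toFun` is the analytic continuation of the series to
`ℂ ∖ {1}`. -/
structure SelbergClass where
  /-- the analytic continuation of the Dirichlet series to `ℂ ∖ {1}` -/
  toFun : ℂ → ℂ
  /-- Dirichlet series coefficients -/
  a : ℕ → ℂ
  analytic : DifferentiableOn ℂ toFun {(1 : ℂ)}ᶜ
  /-- Axiom 1: absolute convergence for `Re s > 1` -/
  abs_conv : ∀ s : ℂ, 1 < s.re → Summable fun n : ℕ+ => ‖a n / (n : ℂ) ^ s‖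
  series_eq : ∀ s : ℂ, 1 < s.re → toFun s = ∑' n : ℕ+, a n / (n : ℂ) ^ s
  /-- Axiom 2: `(s - 1)^m F(s)` extends to an entire function `E` of finite order -/
  m : ℕ
  E : ℂ → ℂ
  E_diff : Differentiable ℂ E
  E_eq : ∀ s : ℂ, s ≠ 1 → E s = (s - 1) ^ m * toFun s
  E_order : ∃ C > 0, ∃ ρ > 0, ∀ s : ℂ, ‖E s‖ ≤ C * Real.exp (‖s‖ ^ ρ)
  /-- Axiom 3: the functional equation with `r` gamma factors -/
  r : ℕ
  Q : ℝ
  Q_pos : 0 < Q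
  lam : Fin r → ℝ
  lam_pos : ∀ j, 0 < lam j
  mu : Fin r → ℂ
  mu_re : ∀ j, 0 ≤ (mu j).re
  w : ℂ
  w_abs : ‖w‖ = 1
  func_eq : ∀ s : ℂ, s ≠ 0 → s ≠ 1 →
    (Q : ℂ) ^ s * (∏ j, Complex.Gamma ((lam j : ℂ) * s + mu j)) * toFun s =
      w * (starRingEnd ℂ)
        ((Q : ℂ) ^ (1 - (starRingEnd ℂ) s) *
          (∏ j, Complex.Gamma ((lam j : ℂ) * (1 - (starRingEnd ℂ) s) + mu j)) *
          toFun (1 - (starRingEnd ℂ) s))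
  /-- Axiom 4: `a n ≪_ε n^ε` -/
  a_bound : ∀ ε : ℝ, 0 < ε → ∃ C > 0, ∀ n : ℕ, 1 ≤ n → ‖a n‖ ≤ C * (n : ℝ) ^ ε
  /-- Axiom 5: Euler product, i.e. `log F(s) = ∑ b(n) n^(-s)` for `Re s > 1` -/
  b : ℕ → ℂ
  b_supp : ∀ n : ℕ, b n ≠ 0 → IsPrimePow n
  b_bound : ∃ θ : ℝ, θ < 1 / 2 ∧ ∃ C > 0, ∀ n : ℕ, 1 ≤ n → ‖b n‖ ≤ C * (n : ℝ) ^ θ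
  b_conv : ∀ s : ℂ, 1 < s.re → Summable fun n : ℕ+ => ‖b n / (n : ℂ) ^ s‖
  log_eq : ∀ s : ℂ, 1 < s.re → Complex.exp (∑' n : ℕ+, b n / (n : ℂ) ^ s) = toFun s

/-- `T_F := max_{1 ≤ j ≤ r} |Im μ_j / λ_j|`, with `T_F = 0` when `r = 0`. -/
noncomputable def SelbergClass.TF (F : SelbergClass) : ℝ :=
  ⨆ j : Fin F.r, |(F.mu j).im / F.lam j|

/-- `F` is not identically equal to `1`. -/
def SelbergClass.Nontrivial (F : SelbergClass) : Prop :=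
  ¬ ∀ s : ℂ, s ≠ 1 → F.toFun s = 1

/-!
For `Re s > 1`, `F⁽ᵏ⁾(s) = (-1)^k ∑ (log n)^k a(n) n^(-s)`. Some `a(n)` with `n ≥ 2` is nonzero, since
otherwise `F = a(1) = 1` (the value `a(1) = 1` is forced by the Euler product). The leading term of
this Dirichlet series then dominates uniformly in `Im s` as `Re s → ∞`, so `F⁽ᵏ⁾` has no zeros in some
half-plane `Re s ≥ σ`. The zeros in the strip therefore lie in a compact rectangle, and `F⁽ᵏ⁾`, being
meromorphic on `ℂ` and not identically zero, has only finitely many zeros there.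
-/

open Filter Topology LSeries Set

lemma tsum_pnat_div_cpow_eq_LSeries (c : ℕ → ℂ) (s : ℂ) :
    ∑' n : ℕ+, c n / (n : ℂ) ^ s = LSeries c s := by
  rw [LSeries, ← tsum_pnat_eq_tsum_of_eq_zero (term_zero c s)]
  exact tsum_congr fun n ↦ (term_of_ne_zero n.ne_zero c s).symm

lemma abscissaOfAbsConv_le_one_of_summable_pnat {c : ℕ → ℂ}
    (hc : ∀ s : ℂ, 1 < s.re → Summable fun n : ℕ+ ↦ ‖c n / (n : ℂ) ^ s‖) :
    abscissaOfAbsConv c ≤ 1 := by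
  refine abscissaOfAbsConv_le_of_forall_lt_LSeriesSummable fun y hy ↦ ?_
  rw [LSeriesSummable, ← summable_norm_iff, ← summable_pnat_iff_summable_nat]
  refine (hc y (by simpa using hy)).congr fun n ↦ ?_
  rw [term_of_ne_zero n.ne_zero]

lemma LSeries.logMul_iterate_apply (f : ℕ → ℂ) (k n : ℕ) :
    logMul^[k] f n = log n ^ k * f n := by
  induction k with
  | zero => simp
  | succ k ih => rw [Function.iterate_succ_apply', logMul, ih]; ring

lemma LSeries.norm_natCast_cpow_mul_term (f : ℕ → ℂ) {n m : ℕ} (hn : n ≠ 0) (hm : m ≠ 0)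
    (s : ℂ) : ‖(n : ℂ) ^ s * term f s m‖ = ‖f m‖ * ((n : ℝ) / m) ^ s.re := by
  rw [norm_mul, norm_term_eq, if_neg hm, norm_natCast_cpow_of_pos (Nat.pos_of_ne_zero hn),
    Real.div_rpow (Nat.cast_nonneg n) (Nat.cast_nonneg m)]
  ring

lemma LSeries.tendsto_cpow_mul_comap_re_atTop {f : ℕ → ℂ} (ha : abscissaOfAbsConv f < ⊤)
    {n : ℕ} (hn : n ≠ 0) (hf : ∀ m, m ≠ 0 → m < n → f m = 0) :
    Tendsto (fun s : ℂ ↦ (n : ℂ) ^ s * LSeries f s) (comap re atTop) (𝓝 (f n)) := by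
  obtain ⟨y, hay, hyt⟩ := exists_between ha
  lift y to ℝ using ⟨hyt.ne, ((OrderBot.bot_le _).trans_lt hay).ne'⟩
  have hy : LSeriesSummable f y := LSeriesSummable_of_abscissaOfAbsConv_lt_re (by simpa)
  have hlim (m : ℕ) : Tendsto (fun s : ℂ ↦ (n : ℂ) ^ s * term f s m) (comap re atTop)
      (𝓝 (if m = n then f n else 0)) := by
    rcases lt_trichotomy m n with hmn | rfl | hmn
    · refine tendsto_const_nhds.congr fun s ↦ ?_
      rcases eq_or_ne m 0 with rfl | hm
      · simp [hmn.ne]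
      · simp [hmn.ne, term_of_ne_zero hm, hf m hm hmn]
    · refine tendsto_const_nhds.congr fun s ↦ ?_
      rw [if_pos rfl, term_of_ne_zero hn, mul_div_cancel₀ _ (by simp [hn])]
    · have hm : m ≠ 0 := by omega
      have hbase : (n : ℝ) / m < 1 := (div_lt_one (by positivity)).2 (mod_cast hmn)
      rw [if_neg hmn.ne', tendsto_zero_iff_norm_tendsto_zero]
      simp_rw [norm_natCast_cpow_mul_term f hn hm]
      have hbase₀ : -1 < (n : ℝ) / m := neg_one_lt_zero.trans_le (by positivity)
      simpa using ((tendsto_rpow_atTop_of_base_lt_one _ hbase₀ hbase).comp tendsto_comap).const_mul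
        ‖f m‖
  -- for `m ≥ n` the norm of the `m`-th term is `‖f m‖ (n / m) ^ Re s`, decreasing in `Re s`
  have hbound : ∀ᶠ s : ℂ in comap re atTop,
      ∀ m, ‖(n : ℂ) ^ s * term f s m‖ ≤ (n : ℝ) ^ y * ‖term f y m‖ := by
    filter_upwards [(eventually_ge_atTop y).comap re] with s hs m
    rcases eq_or_ne m 0 with rfl | hm
    · simp
    rcases lt_or_ge m n with hmn | hmn
    · simp [term_of_ne_zero hm, hf m hm hmn]
    calc ‖(n : ℂ) ^ s * term f s m‖ = ‖f m‖ * ((n : ℝ) / m) ^ s.re :=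
          norm_natCast_cpow_mul_term f hn hm s
      _ ≤ ‖f m‖ * ((n : ℝ) / m) ^ y := by
          refine mul_le_mul_of_nonneg_left ?_ (norm_nonneg _)
          exact Real.rpow_le_rpow_of_exponent_ge (by positivity)
            (div_le_one_of_le₀ (by exact_mod_cast hmn) (Nat.cast_nonneg m)) hs
      _ = ‖(n : ℂ) ^ (y : ℂ) * term f y m‖ := by
          rw [norm_natCast_cpow_mul_term f hn hm, ofReal_re]
      _ = (n : ℝ) ^ y * ‖term f y m‖ := by
          rw [norm_mul, norm_natCast_cpow_of_pos (Nat.pos_of_ne_zero hn), ofReal_re]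
  have := tendsto_tsum_of_dominated_convergence (hy.norm.mul_left _) hlim hbound
  simp only [tsum_mul_left, tsum_ite_eq] at this
  exact this

lemma LSeries.exists_forall_le_re_ne_zero {f : ℕ → ℂ} (ha : abscissaOfAbsConv f < ⊤)
    (hf : ∃ n, n ≠ 0 ∧ f n ≠ 0) : ∃ σ : ℝ, ∀ s : ℂ, σ ≤ s.re → LSeries f s ≠ 0 := by
  classical
  obtain ⟨hn, hfn⟩ := Nat.find_spec hf
  have hlim := tendsto_cpow_mul_comap_re_atTop ha hn
    fun m hm hlt ↦ not_not.1 fun h ↦ Nat.find_min hf hlt ⟨hm, h⟩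
  obtain ⟨σ, hσ⟩ := eventually_atTop.1 (eventually_comap.1 (hlim.eventually_ne hfn))
  exact ⟨σ, fun s hs h ↦ hσ s.re hs s rfl (by simp [h])⟩

lemma Meromorphic.finite_inter_preimage_zero {𝕜 E : Type*} [NontriviallyNormedField 𝕜]
    [PreconnectedSpace 𝕜] [NormedAddCommGroup E] [NormedSpace 𝕜 E] {f : 𝕜 → E}
    (hf : Meromorphic f) {x : 𝕜} (hx : ∀ᶠ z in 𝓝[≠] x, f z ≠ 0) {K : Set 𝕜} (hK : IsCompact K) :
    (K ∩ f ⁻¹' {0}).Finite := by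
  have hf' : MeromorphicOn f univ := meromorphicOn_univ.2 hf
  have hord : ∀ u ∈ univ, meromorphicOrderAt f u ≠ ⊤ := fun u _ ↦
    hf'.meromorphicOrderAt_ne_top_of_isPreconnected isPreconnected_univ (mem_univ x) (mem_univ u)
      ((meromorphicOrderAt_ne_top_iff_eventually_ne_zero (hf x)).2 hx)
  have hcodisc := hf'.eventually_codiscreteWithin_apply_ne_zero hord
  refine (hK.finite_sdiff_of_mem_codiscreteWithin
    (codiscreteWithin_mono (subset_univ K) hcodisc)).subset ?_
  rintro z ⟨hzK, hz⟩
  exact ⟨hzK, by simpa using hz⟩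

namespace SelbergClass

variable (F : SelbergClass)

lemma abscissaOfAbsConv_a_le_one : abscissaOfAbsConv F.a ≤ 1 :=
  abscissaOfAbsConv_le_one_of_summable_pnat F.abs_conv

lemma abscissaOfAbsConv_b_le_one : abscissaOfAbsConv F.b ≤ 1 :=
  abscissaOfAbsConv_le_one_of_summable_pnat F.b_conv

lemma toFun_eq_LSeries {s : ℂ} (hs : 1 < s.re) : F.toFun s = LSeries F.a s := by
  rw [F.series_eq s hs, tsum_pnat_div_cpow_eq_LSeries]

lemma exp_LSeries_b {s : ℂ} (hs : 1 < s.re) : exp (LSeries F.b s) = F.toFun s := by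
  rw [← F.log_eq s hs, tsum_pnat_div_cpow_eq_LSeries]

lemma b_one : F.b 1 = 0 := by
  by_contra h
  exact not_isPrimePow_one (F.b_supp 1 h)

/-- Both `F(x) = L(a, x) → a 1` and `F(x) = exp L(b, x) → exp (b 1) = 1` as real `x → ∞`. -/
lemma a_one : F.a 1 = 1 := by
  have ha := LSeries.tendsto_atTop (F.abscissaOfAbsConv_a_le_one.trans_lt (EReal.coe_lt_top 1))
  have hb := (continuous_exp.tendsto _).comp
    (LSeries.tendsto_atTop (F.abscissaOfAbsConv_b_le_one.trans_lt (EReal.coe_lt_top 1)))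
  rw [Function.comp_def, b_one, exp_zero] at hb
  refine tendsto_nhds_unique (ha.congr' ?_) hb
  filter_upwards [eventually_gt_atTop 1] with x hx
  rw [F.exp_LSeries_b (by simpa using hx), F.toFun_eq_LSeries (by simpa using hx)]

lemma meromorphic : Meromorphic F.toFun := by
  intro z
  rcases eq_or_ne z 1 with rfl | hz
  · refine ((((MeromorphicAt.id 1).sub (.const 1 1)).zpow (-F.m : ℤ)).mul
      (F.E_diff.analyticAt 1).meromorphicAt).congr ?_
    filter_upwards [self_mem_nhdsWithin] with s hs
    have hs' : s - 1 ≠ 0 := sub_ne_zero.2 hs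
    simp [F.E_eq s hs, zpow_neg, hs']
  · exact (F.analytic.analyticAt (isOpen_compl_singleton.mem_nhds hz)).meromorphicAt

lemma exists_two_le_a_ne_zero (hF : F.Nontrivial) : ∃ n, 2 ≤ n ∧ F.a n ≠ 0 := by
  by_contra! h
  have hconst {s : ℂ} (hs : 1 < s.re) : F.toFun s = 1 := by
    rw [F.toFun_eq_LSeries hs, LSeries, tsum_eq_single 1, term_of_ne_zero one_ne_zero, a_one]
    · simp
    rintro (_ | _ | m) hm
    · exact term_zero ..
    · exact absurd rfl hm
    · rw [term_of_ne_zero (by omega), h (m + 2) (by omega), zero_div]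
  have hev : F.toFun =ᶠ[𝓝 2] fun _ ↦ 1 :=
    ((isOpen_lt continuous_const continuous_re).eventually_mem (by norm_num)).mono
      fun s hs ↦ hconst hs
  have hconn : IsPreconnected ({1}ᶜ : Set ℂ) :=
    (isConnected_compl_singleton_of_one_lt_rank (by simp) _).isPreconnected
  exact hF fun s hs ↦ (F.analytic.analyticOnNhd isOpen_compl_singleton)
    |>.eqOn_of_preconnected_of_eventuallyEq analyticOnNhd_const hconn (by norm_num) hev hs

lemma iteratedDeriv_eq_LSeries (k : ℕ) {s : ℂ} (hs : 1 < s.re) :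
    iteratedDeriv k F.toFun s = (-1) ^ k * LSeries (logMul^[k] F.a) s := by
  have hev : F.toFun =ᶠ[𝓝 s] LSeries F.a :=
    ((isOpen_lt continuous_const continuous_re).eventually_mem hs).mono
      fun z hz ↦ F.toFun_eq_LSeries hz
  rw [hev.iteratedDeriv_eq, LSeries_iteratedDeriv k
    (F.abscissaOfAbsConv_a_le_one.trans_lt (by exact_mod_cast hs))]

lemma exists_forall_le_re_iteratedDeriv_ne_zero (hF : F.Nontrivial) (k : ℕ) :
    ∃ σ : ℝ, ∀ s : ℂ, σ ≤ s.re → iteratedDeriv k F.toFun s ≠ 0 := by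
  obtain ⟨n, hn, han⟩ := F.exists_two_le_a_ne_zero hF
  have hlog : log n ≠ 0 := by
    rw [← natCast_log, ofReal_ne_zero]
    exact (Real.log_pos (by exact_mod_cast hn)).ne'
  obtain ⟨σ, hσ⟩ := LSeries.exists_forall_le_re_ne_zero (f := logMul^[k] F.a)
    (by rw [absicssaOfAbsConv_logPowMul]
        exact F.abscissaOfAbsConv_a_le_one.trans_lt (EReal.coe_lt_top 1))
    ⟨n, by omega, by rw [logMul_iterate_apply]; exact mul_ne_zero (pow_ne_zero _ hlog) han⟩
  refine ⟨max σ 2, fun s hs ↦ ?_⟩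
  rw [F.iteratedDeriv_eq_LSeries k (by linarith [le_max_right σ 2])]
  exact mul_ne_zero (pow_ne_zero _ (by norm_num)) (hσ s (le_of_max_le_left hs))

end SelbergClass

theorem selberg_deriv_finitely_many_zeros_low_general (F : SelbergClass) (hF : F.Nontrivial)
    (k : ℕ) (α : ℝ) :
    {s : ℂ | s ≠ 1 ∧ iteratedDeriv k F.toFun s = 0 ∧ -α < s.re ∧ |s.im| ≤ F.TF}.Finite := by
  obtain ⟨σ, hσ⟩ := F.exists_forall_le_re_iteratedDeriv_ne_zero hF k
  have hmer : Meromorphic (iteratedDeriv k F.toFun) :=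
    iteratedDeriv_eq_iterate (f := F.toFun) ▸ F.meromorphic.iterated_deriv
  have hne : ∀ᶠ z in 𝓝[≠] ((σ + 1 : ℝ) : ℂ), iteratedDeriv k F.toFun z ≠ 0 :=
    nhdsWithin_le_nhds <| ((isOpen_lt continuous_const continuous_re).eventually_mem
      (by simp : σ < ((σ + 1 : ℝ) : ℂ).re)).mono fun z hz ↦ hσ z hz.le
  have hK : IsCompact (Icc (-α) σ ×ℂ Icc (-F.TF) F.TF) := isCompact_Icc.reProdIm isCompact_Icc
  refine (hmer.finite_inter_preimage_zero hne hK).subset ?_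
  rintro s ⟨-, hs, hre, him⟩
  refine ⟨⟨⟨hre.le, ?_⟩, abs_le.1 him⟩, hs⟩
  by_contra! hσs
  exact hσ s hσs.le hs

/-- For `F ∈ 𝒮` not identically `1`, any `k ≥ 0` and any `α > 0`, the `k`-th derivative
`F^(k)` has only finitely many zeros with `Re s > -α` and `|Im s| ≤ T_F`. -/
theorem selberg_deriv_finitely_many_zeros_low (F : SelbergClass) (hF : F.Nontrivial)
    (k : ℕ) (α : ℝ) (hα : 0 < α) :
    {s : ℂ | s ≠ 1 ∧ iteratedDeriv k F.toFun s = 0 ∧ -α < s.re ∧ |s.im| ≤ F.TF}.Finite :=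
  selberg_deriv_finitely_many_zeros_low_general F hF k α
end
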